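/- Let A be a real n×n matrix that is NOT diagonalizable over ℝ. Then for every positive definite Hermitian matrix h = (h_{jk}) with ω = Σ h_{jk} dz_j ∧ dz̄_k, the pullbacks of ω to both ℝⁿ and S(A) = (A+i)ℝⁿ cannot both vanish. Equivalently, ℝⁿ ∪ S(A) is not Lagrangian with respect to any constant-coefficient Kähler form on ℂⁿ. -/

import Mathlib

/-!
Vanishing of `ω` on `ℝⁿ` says that `h` is symmetric; being Hermitian, it is then real, `h = M`
with `M` real symmetric positive definite. For real symmetric `M`,
`ω(Au + iu, Av + iv) = 2i · uᵀ (M A - (M A)ᵀ) v`, so vanishing on `S(A)` says that `M A` is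
symmetric, i.e. `A` is self-adjoint for the inner product `xᵀ M y`. Hence `√M A (√M)⁻¹` is
symmetric, and `A` is diagonalizable by the spectral theorem.
-/

open Matrix

noncomputable def omegaForm (n : ℕ) (h : Matrix (Fin n) (Fin n) ℂ) (U V : Fin n → ℂ) : ℂ :=
  ∑ j, ∑ k, h j k * (U j * (starRingEnd ℂ) (V k) - V j * (starRingEnd ℂ) (U k))

noncomputable def iotaA (n : ℕ) (A : Matrix (Fin n) (Fin n) ℝ) (t : Fin n → ℝ) : Fin n → ℂ :=
  fun j => (A.mulVec t j : ℝ) + (t j : ℝ) * Complex.I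

theorem star_ofRealHom_comp {ι : Type*} (x : ι → ℝ) :
    star (Complex.ofRealHom ∘ x) = Complex.ofRealHom ∘ x := by
  ext
  simp

namespace Matrix

variable {ι : Type*}

theorem IsHermitian.map_ofReal_map_re {h : Matrix ι ι ℂ} (hh : h.IsHermitian)
    (hsymm : hᵀ = h) :
    (h.map Complex.re).map Complex.ofRealHom = h := by
  ext a b
  exact Complex.conj_eq_iff_re.mp ((congrFun₂ hh b a).trans (congrFun₂ hsymm a b))

variable [Fintype ι]

section Diagonalizable

variable [DecidableEq ι]

def IsDiagonalizable {R : Type*} [CommRing R] (A : Matrix ι ι R) : Prop :=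
  ∃ P D : Matrix ι ι R, IsUnit P ∧ D.IsDiag ∧ A = P * D * P⁻¹

theorem IsDiagonalizable.inv_mul_mul {R : Type*} [CommRing R] {B : Matrix ι ι R}
    (hB : B.IsDiagonalizable) {S : Matrix ι ι R} (hS : IsUnit S) :
    (S⁻¹ * B * S).IsDiagonalizable := by
  obtain ⟨P, D, hP, hD, rfl⟩ := hB
  refine ⟨S⁻¹ * P, D, (isUnit_nonsing_inv_iff.2 hS).mul hP, hD, ?_⟩
  rw [mul_inv_rev, nonsing_inv_nonsing_inv _ ((isUnit_iff_isUnit_det S).1 hS)]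
  simp only [Matrix.mul_assoc]

theorem IsHermitian.isDiagonalizable {𝕜 : Type*} [RCLike 𝕜] {A : Matrix ι ι 𝕜}
    (hA : A.IsHermitian) : A.IsDiagonalizable := by
  set U := hA.eigenvectorUnitary
  refine ⟨U, diagonal (RCLike.ofReal ∘ hA.eigenvalues), (Unitary.toUnits U).isUnit,
    isDiag_diagonal _, ?_⟩
  rw [inv_eq_left_inv (Unitary.coe_star_mul_self U)]
  exact hA.spectral_theorem

open scoped ComplexOrder MatrixOrder in
theorem PosDef.isDiagonalizable_of_isHermitian_mul {𝕜 : Type*} [RCLike 𝕜]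
    {H A : Matrix ι ι 𝕜} (hH : H.PosDef) (hHA : (H * A).IsHermitian) :
    A.IsDiagonalizable := by
  set S := CFC.sqrt H
  have hS : IsUnit S := hH.isStrictlyPositive.isUnit_cfcSqrt
  have hS_herm : S.IsHermitian := (CFC.sqrt_nonneg H).posSemidef.isHermitian
  have hSS : S * S = H := CFC.sqrt_mul_sqrt_self H hH.posSemidef.nonneg
  -- `S⁻¹ * (H * A) * S⁻¹ = S * A * S⁻¹`
  have hB : (S⁻¹ * (H * A) * S⁻¹).IsHermitian := by
    simpa [conjTranspose_nonsing_inv, hS_herm.eq] using isHermitian_conjTranspose_mul_mul S⁻¹ hHA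
  have hA : A = S⁻¹ * (S⁻¹ * (H * A) * S⁻¹) * S := by
    have hdet := (isUnit_iff_isUnit_det S).1 hS
    rw [← hSS]
    simp only [Matrix.mul_assoc, nonsing_inv_mul _ hdet, nonsing_inv_mul_cancel_left _ _ hdet,
      Matrix.mul_one]
  rw [hA]
  exact hB.isDiagonalizable.inv_mul_mul hS

end Diagonalizable

theorem ofRealHom_comp_dotProduct_map_mulVec (M : Matrix ι ι ℝ) (x y : ι → ℝ) :
    (Complex.ofRealHom ∘ x) ⬝ᵥ (M.map Complex.ofRealHom *ᵥ (Complex.ofRealHom ∘ y)) =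
      ((x ⬝ᵥ M *ᵥ y : ℝ) : ℂ) := by
  simp [dotProduct, mulVec]

theorem posDef_of_re_dotProduct_map_ofReal_mulVec_pos {M : Matrix ι ι ℝ} (hM : Mᵀ = M)
    (hpos : ∀ x : ι → ℂ, x ≠ 0 →
      0 < (star x ⬝ᵥ (M.map Complex.ofRealHom *ᵥ x)).re) :
    M.PosDef := by
  have hM_herm : M.IsHermitian := by
    rwa [IsHermitian, conjTranspose_eq_transpose_of_trivial]
  refine posDef_iff_dotProduct_mulVec.2 ⟨hM_herm, fun x hx => ?_⟩
  have hx' : Complex.ofRealHom ∘ x ≠ 0 := fun h0 =>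
    hx (funext fun i => Complex.ofReal_eq_zero.mp (congrFun h0 i))
  simpa [star_ofRealHom_comp, ofRealHom_comp_dotProduct_map_mulVec] using hpos _ hx'

end Matrix

theorem omegaForm_eq_dotProduct_sub (n : ℕ) (h : Matrix (Fin n) (Fin n) ℂ)
    (U V : Fin n → ℂ) :
    omegaForm n h U V = U ⬝ᵥ h *ᵥ star V - V ⬝ᵥ h *ᵥ star U := by
  simp only [omegaForm, dotProduct, mulVec, Finset.mul_sum, ← Finset.sum_sub_distrib]
  refine Finset.sum_congr rfl fun j _ => Finset.sum_congr rfl fun k _ => ?_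
  simp only [Pi.star_apply, Complex.star_def]
  ring

theorem omegaForm_ofReal_single (n : ℕ) (h : Matrix (Fin n) (Fin n) ℂ) (a b : Fin n) :
    omegaForm n h (fun j => ((Pi.single a 1 : Fin n → ℝ) j : ℂ))
      (fun j => ((Pi.single b 1 : Fin n → ℝ) j : ℂ)) = h a b - h b a := by
  simp [omegaForm, Pi.single_apply, apply_ite Complex.ofReal, mul_sub, mul_ite,
    Finset.sum_sub_distrib]

theorem transpose_eq_of_omegaForm_ofReal_eq_zero (n : ℕ) (h : Matrix (Fin n) (Fin n) ℂ)
    (hω : ∀ u v : Fin n → ℝ,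
      omegaForm n h (fun j => (u j : ℂ)) (fun j => (v j : ℂ)) = 0) :
    hᵀ = h := by
  ext a b
  simpa [omegaForm_ofReal_single, sub_eq_zero, eq_comm] using
    hω (Pi.single b 1) (Pi.single a 1)

theorem iotaA_eq (n : ℕ) (A : Matrix (Fin n) (Fin n) ℝ) (t : Fin n → ℝ) :
    iotaA n A t = Complex.ofRealHom ∘ (A *ᵥ t) + Complex.I • (Complex.ofRealHom ∘ t) := by
  ext j
  simp [iotaA, mul_comm]

theorem omegaForm_map_ofReal_iotaA (n : ℕ) {M : Matrix (Fin n) (Fin n) ℝ} (hM : Mᵀ = M)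
    (A : Matrix (Fin n) (Fin n) ℝ) (u v : Fin n → ℝ) :
    omegaForm n (M.map Complex.ofRealHom) (iotaA n A u) (iotaA n A v) =
      2 * Complex.I * ((u ⬝ᵥ (M * A - (M * A)ᵀ) *ᵥ v : ℝ) : ℂ) := by
  have hcomm : ∀ x y : Fin n → ℝ, x ⬝ᵥ M *ᵥ y = y ⬝ᵥ M *ᵥ x := fun x y => by
    rw [← dotProduct_transpose_mulVec, hM]
  simp only [omegaForm_eq_dotProduct_sub, iotaA_eq, star_add, star_smul, star_ofRealHom_comp,
    Complex.star_def, Complex.conj_I, dotProduct_add, add_dotProduct, mulVec_add, mulVec_smul,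
    dotProduct_smul, smul_dotProduct, smul_eq_mul, ofRealHom_comp_dotProduct_map_mulVec,
    transpose_mul, hM, sub_mulVec, dotProduct_sub, ← mulVec_mulVec, dotProduct_mulVec _ Aᵀ,
    vecMul_transpose]
  rw [hcomm (A *ᵥ v) (A *ᵥ u), hcomm (A *ᵥ v) u, hcomm v u, hcomm v (A *ᵥ u)]
  push_cast
  ring

theorem transpose_mul_eq_of_omegaForm_iotaA_eq_zero (n : ℕ) {M : Matrix (Fin n) (Fin n) ℝ}
    (hM : Mᵀ = M) (A : Matrix (Fin n) (Fin n) ℝ)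
    (hω : ∀ u v : Fin n → ℝ,
      omegaForm n (M.map Complex.ofRealHom) (iotaA n A u) (iotaA n A v) = 0) :
    (M * A)ᵀ = M * A := by
  rw [transpose_mul, hM]
  ext a b
  have := hω (Pi.single a 1) (Pi.single b 1)
  simp only [omegaForm_map_ofReal_iotaA n hM, mul_eq_zero, Complex.ofReal_eq_zero] at this
  simpa [Complex.I_ne_zero, sub_eq_zero, hM, eq_comm] using this

theorem stmt_9 (n : ℕ) (A : Matrix (Fin n) (Fin n) ℝ)
    (hA : ¬ ∃ (P D : Matrix (Fin n) (Fin n) ℝ), IsUnit P ∧ D.IsDiag ∧ A = P * D * P⁻¹)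
    (h : Matrix (Fin n) (Fin n) ℂ) (hherm : h.IsHermitian)
    (hpd : ∀ x : Fin n → ℂ, x ≠ 0 → 0 < (dotProduct (star x) (h.mulVec x)).re) :
    ¬ ((∀ u v : Fin n → ℝ,
          omegaForm n h (fun j => (u j : ℂ)) (fun j => (v j : ℂ)) = 0) ∧
       (∀ u v : Fin n → ℝ, omegaForm n h (iotaA n A u) (iotaA n A v) = 0)) := by
  rintro ⟨hω_real, hω_graph⟩
  have hsymm := transpose_eq_of_omegaForm_ofReal_eq_zero n h hω_real
  set M := h.map Complex.re
  have hM : Mᵀ = M := by rw [← transpose_map, hsymm]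
  rw [← hherm.map_ofReal_map_re hsymm] at hpd hω_graph
  have hM_pd := posDef_of_re_dotProduct_map_ofReal_mulVec_pos hM hpd
  have hMA : (M * A).IsHermitian := by
    rw [IsHermitian, conjTranspose_eq_transpose_of_trivial]
    exact transpose_mul_eq_of_omegaForm_iotaA_eq_zero n hM A hω_graph
  exact hA (hM_pd.isDiagonalizable_of_isHermitian_mul hMA)
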